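/- arXiv:2109.01204 — 6 statements merged into one kernel-verified Lean document; each statement's English description precedes it below -/
import Mathlib

section
/- For a triangular algebra 𝔄 = Tri(A, M, B) with idempotent e = [[1_A,0],[0,0]] and f = 1 − e, the center satisfies Z(𝔄) = { c ∈ e𝔄e + f𝔄f : c·(exf) = (exf)·c for all x ∈ 𝔄 }. -/
/-!
Multiplying out, for `c = [[a, m], [0, b]]` one gets `e c e + f c f = [[a, 0], [0, b]]`, `e x f` runs
over the matrices `[[0, n], [0, 0]]`, and `c` commutes with `[[0, n], [0, 0]]` iff `a • n = n • b`.
So the right-hand side says that `m = 0` and that `a` and `b` act alike on `M`; a central `c` has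
these properties since it commutes with `f` and with every `[[0, n], [0, 0]]`. Conversely, if
`a • n = n • b` for all `n`, then `(a p) • n = a • (p • n) = (p • n) • b = p • (n • b) = (p a) • n`,
so faithfulness makes `a` central in `A`, and likewise `b` central in `B`; hence `[[a, 0], [0, b]]`
commutes with every matrix.
-/

set_option linter.unusedSectionVars false

open MulOpposite TrivSqZeroExt Finset

section TriDef
variable (R A B M : Type*) [CommRing R] [Ring A] [Ring B] [Algebra R A] [Algebra R B]
  [AddCommGroup M] [Module R M] [Module A M] [Module Bᵐᵒᵖ M] [SMulCommClass A Bᵐᵒᵖ M]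
  [IsScalarTower R A M] [IsScalarTower R Bᵐᵒᵖ M]

/-- left action of `A × B` on `M` through the first factor -/
instance Tri.instModuleProd : Module (A × B) M := Module.compHom M (RingHom.fst A B)

/-- right action of `A × B` on `M` through the second factor -/
instance Tri.instModuleProdOp : Module (A × B)ᵐᵒᵖ M :=
  Module.compHom M (RingHom.op (RingHom.snd A B))

instance Tri.instSMulCommClass : SMulCommClass (A × B) (A × B)ᵐᵒᵖ M :=
  ⟨fun p q m => smul_comm p.1 (op (unop q).2) m⟩

instance Tri.instTowerL : IsScalarTower R (A × B) M :=
  ⟨fun r p m => show (r • p.1) • m = r • (p.1 • m) from smul_assoc r p.1 m⟩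

instance Tri.instTowerR : IsScalarTower R (A × B)ᵐᵒᵖ M :=
  ⟨fun r q m => show (op (r • (unop q).2)) • m = r • ((op (unop q).2) • m) by
    rw [MulOpposite.op_smul]; exact smul_assoc r (op (unop q).2) m⟩

/-- The triangular algebra `Tri(A, M, B)` of matrices `[[a, m],[0, b]]`. -/
abbrev Tri : Type _ := TrivSqZeroExt (A × B) M

variable {A B M}

/-- the matrix `[[a, m],[0, b]]` -/
def Tri.mk (a : A) (m : M) (b : B) : Tri A B M := ⟨(a, b), m⟩

end TriDef

theorem mem_center_of_forall_smul_eq_smul {S T M : Type*} [Monoid S] [MulAction S M] [SMul T M]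
    [SMulCommClass S T M] [FaithfulSMul S M] {s : S} {t : T} (h : ∀ m : M, s • m = t • m) :
    s ∈ Set.center S :=
  Semigroup.mem_center_iff.mpr fun p => eq_of_smul_eq_smul fun m : M => by
    rw [mul_smul, mul_smul, h, smul_comm, ← h]

theorem faithfulSMul_of_forall_smul_eq_zero {S M : Type*} [Ring S] [AddCommGroup M] [Module S M]
    (h : ∀ s : S, (∀ m : M, s • m = 0) → s = 0) : FaithfulSMul S M :=
  ⟨fun hs => sub_eq_zero.mp (h _ fun m => by rw [sub_smul, hs, sub_self])⟩

section
variable {R A B M : Type*} [CommRing R] [Ring A] [Ring B] [Algebra R A] [Algebra R B]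
  [AddCommGroup M] [Module R M] [Module A M] [Module Bᵐᵒᵖ M] [SMulCommClass A Bᵐᵒᵖ M]
  [IsScalarTower R A M] [IsScalarTower R Bᵐᵒᵖ M]

namespace Tri

theorem eta (x : Tri A B M) : Tri.mk x.fst.1 x.snd x.fst.2 = x := rfl

@[simp] theorem fst_mk (a : A) (m : M) (b : B) : (Tri.mk a m b).fst = (a, b) := rfl

@[simp] theorem snd_mk (a : A) (m : M) (b : B) : (Tri.mk a m b).snd = m := rfl

theorem mk_inj {a a' : A} {m m' : M} {b b' : B} :
    Tri.mk a m b = Tri.mk a' m' b' ↔ a = a' ∧ m = m' ∧ b = b' := by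
  rw [TrivSqZeroExt.ext_iff]
  simp [Tri.mk, Prod.ext_iff, and_assoc, and_comm]

theorem mk_add_mk (a a' : A) (m m' : M) (b b' : B) :
    Tri.mk a m b + Tri.mk a' m' b' = Tri.mk (a + a') (m + m') (b + b') := rfl

theorem mk_sub_mk (a a' : A) (m m' : M) (b b' : B) :
    Tri.mk a m b - Tri.mk a' m' b' = Tri.mk (a - a') (m - m') (b - b') := rfl

theorem mk_mul_mk (a a' : A) (m m' : M) (b b' : B) :
    Tri.mk a m b * Tri.mk a' m' b' = Tri.mk (a * a') (a • m' + op b' • m) (b * b') := rfl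

theorem one_eq : (1 : Tri A B M) = Tri.mk 1 0 1 := rfl

theorem one_sub_mk_one_zero_zero : (1 : Tri A B M) - Tri.mk 1 0 0 = Tri.mk 0 0 1 := by
  rw [one_eq, mk_sub_mk, sub_self, sub_self, sub_zero]

theorem peirce_offDiag_eq (x : Tri A B M) :
    Tri.mk 1 0 0 * x * Tri.mk 0 0 1 = Tri.mk 0 x.snd 0 := by
  rw [← eta x]
  simp [mk_mul_mk]

theorem peirce_diag_eq (x : Tri A B M) :
    Tri.mk 1 0 0 * x * Tri.mk 1 0 0 + Tri.mk 0 0 1 * x * Tri.mk 0 0 1 = Tri.mk x.fst.1 0 x.fst.2 := by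
  rw [← eta x]
  simp [mk_mul_mk, mk_add_mk]

theorem commute_offDiag_iff {a : A} {m : M} {b : B} {n : M} :
    Commute (Tri.mk a m b) (Tri.mk 0 n 0) ↔ a • n = op b • n := by
  simp [Commute, SemiconjBy, mk_mul_mk, mk_inj]

theorem mem_center_iff [FaithfulSMul A M] [FaithfulSMul Bᵐᵒᵖ M] {a : A} {m : M} {b : B} :
    Tri.mk a m b ∈ Subring.center (Tri A B M) ↔ m = 0 ∧ ∀ n : M, a • n = op b • n := by
  rw [Subring.mem_center_iff]
  constructor
  · intro h
    have hm : m = 0 := by simpa [mk_mul_mk, mk_inj] using (h (Tri.mk 0 0 1)).symm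
    exact ⟨hm, fun n => commute_offDiag_iff.mp (h (Tri.mk 0 n 0)).symm⟩
  · rintro ⟨rfl, h⟩ x
    have ha : a ∈ Set.center A := mem_center_of_forall_smul_eq_smul h
    have hb : b ∈ Set.center B := by
      have := SMulCommClass.symm A Bᵐᵒᵖ M
      exact MulOpposite.op_mem_center_iff.mp (mem_center_of_forall_smul_eq_smul fun n => (h n).symm)
    rw [← eta x]
    simp [mk_mul_mk, h, Semigroup.mem_center_iff.mp ha, Semigroup.mem_center_iff.mp hb]

end Tri

/-- `Z(𝔄) = { c ∈ e𝔄e + f𝔄f : c·(exf) = (exf)·c for all x ∈ 𝔄 }` where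
`e = [[1,0],[0,0]]` and `f = 1 - e`. -/
theorem center_eq_diagonal_commuting_with_offdiagonal
    (faithA : ∀ a : A, (∀ m : M, a • m = 0) → a = 0)
    (faithB : ∀ b : B, (∀ m : M, op b • m = 0) → b = 0)
    (e : Tri A B M) (he : e = Tri.mk 1 0 0) (f : Tri A B M) (hf : f = 1 - e)
    (c : Tri A B M) :
    c ∈ Subring.center (Tri A B M) ↔
      (c = e * c * e + f * c * f ∧ ∀ x : Tri A B M, c * (e * x * f) = (e * x * f) * c) := by
  have := faithfulSMul_of_forall_smul_eq_zero faithA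
  have : FaithfulSMul Bᵐᵒᵖ M :=
    faithfulSMul_of_forall_smul_eq_zero fun s hs => by simpa using faithB s.unop hs
  obtain ⟨a, m, b, rfl⟩ : ∃ a m b, c = Tri.mk a m b := ⟨_, _, _, (Tri.eta c).symm⟩
  subst he hf
  simp only [Tri.one_sub_mk_one_zero_zero, Tri.peirce_diag_eq, Tri.peirce_offDiag_eq]
  rw [Tri.mem_center_iff]
  refine and_congr (by simp [Tri.mk_inj]) ⟨fun h x => ?_, fun h n => ?_⟩
  · exact Tri.commute_offDiag_iff.mpr (h x.snd)
  · exact Tri.commute_offDiag_iff.mp (h (Tri.mk 0 n 0))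

end
end

section
/- For a triangular algebra 𝔄 = Tri(A, M, B), there exists a unique algebra isomorphism η : π_A(Z(𝔄)) → π_B(Z(𝔄)) such that a·m = m·η(a) for all m ∈ M and all a ∈ π_A(Z(𝔄)). -/
set_option linter.unusedSectionVars false

open MulOpposite TrivSqZeroExt Finset

section
variable {R A B M : Type*} [CommRing R] [Ring A] [Ring B] [Algebra R A] [Algebra R B]
  [AddCommGroup M] [Module R M] [Module A M] [Module Bᵐᵒᵖ M] [SMulCommClass A Bᵐᵒᵖ M]
  [IsScalarTower R A M] [IsScalarTower R Bᵐᵒᵖ M]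

/-- There is a unique algebra isomorphism `η : π_A(Z(𝔄)) → π_B(Z(𝔄))` such that
`a • m = m • η(a)` for all `m ∈ M` and `a ∈ π_A(Z(𝔄))`. -/
theorem exists_unique_center_projection_iso
    (faithA : ∀ a : A, (∀ m : M, a • m = 0) → a = 0)
    (faithB : ∀ b : B, (∀ m : M, op b • m = 0) → b = 0)
    (PA : Subalgebra R A)
    (hPA : PA = (Subalgebra.center R (Tri A B M)).map
      ((AlgHom.fst R A B).comp (fstHom R (A × B) M)))
    (PB : Subalgebra R B)
    (hPB : PB = (Subalgebra.center R (Tri A B M)).map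
      ((AlgHom.snd R A B).comp (fstHom R (A × B) M))) :
    ∃! η : PA ≃ₐ[R] PB, ∀ (a : PA) (m : M), (a : A) • m = op ((η a : B)) • m := by
  classical
  have key : ∀ z : Tri A B M, z ∈ Subalgebra.center R (Tri A B M) →
      ∀ m : M, z.fst.1 • m = op z.fst.2 • m := by
    intro z hz m
    have h := Subalgebra.mem_center_iff.mp hz (inr m)
    have h2 := congrArg TrivSqZeroExt.snd h
    simp only [snd_mul, snd_inr, fst_inr] at h2
    rw [op_zero, zero_smul, zero_smul, zero_add, add_zero] at h2
    exact h2.symm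
  have faithA' : ∀ a a' : A, (∀ m : M, a • m = a' • m) → a = a' := by
    intro a a' h
    have := faithA (a - a') (fun m => by rw [sub_smul, h m, sub_self])
    exact sub_eq_zero.mp this
  have faithB' : ∀ b b' : B, (∀ m : M, op b • m = op b' • m) → b = b' := by
    intro b b' h
    have := faithB (b - b') (fun m => by rw [op_sub, sub_smul, h m, sub_self])
    exact sub_eq_zero.mp this
  have hAz : ∀ a : PA, ∃ z, z ∈ Subalgebra.center R (Tri A B M) ∧ z.fst.1 = (a : A) := by
    intro a
    obtain ⟨z, hz, hza⟩ := hPA.le a.2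
    exact ⟨z, hz, hza⟩
  choose zA hzA hzA1 using hAz
  have hBz : ∀ b : PB, ∃ z, z ∈ Subalgebra.center R (Tri A B M) ∧ z.fst.2 = (b : B) := by
    intro b
    obtain ⟨z, hz, hzb⟩ := hPB.le b.2
    exact ⟨z, hz, hzb⟩
  choose zB hzB hzB2 using hBz
  have memB : ∀ a : PA, (zA a).fst.2 ∈ PB := by
    intro a; exact hPB.ge ⟨zA a, hzA a, rfl⟩
  have memA : ∀ b : PB, (zB b).fst.1 ∈ PA := by
    intro b; exact hPA.ge ⟨zB b, hzB b, rfl⟩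
  set f : PA → PB := fun a => ⟨(zA a).fst.2, memB a⟩ with hfdef
  set g : PB → PA := fun b => ⟨(zB b).fst.1, memA b⟩ with hgdef
  have hfprop : ∀ (a : PA) (m : M), (a : A) • m = op ((f a : B)) • m := by
    intro a m; rw [← hzA1 a]; exact key _ (hzA a) m
  have hgprop : ∀ (b : PB) (m : M), ((g b : A)) • m = op (b : B) • m := by
    intro b m; rw [← hzB2 b]; exact key _ (hzB b) m
  have f_eq : ∀ (a : PA) (b : B), (∀ m : M, (a : A) • m = op b • m) → (f a : B) = b := by
    intro a b h
    exact faithB' _ _ (fun m => by rw [← hfprop a m, h m])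
  have map_one' : f 1 = 1 := by
    refine Subtype.ext (f_eq 1 1 (fun m => ?_))
    simp
  have map_mul' : ∀ a a' : PA, f (a * a') = f a * f a' := by
    intro a a'
    refine Subtype.ext (f_eq (a * a') ((f a : B) * (f a' : B)) (fun m => ?_))
    calc ((a * a' : PA) : A) • m = (a : A) • ((a' : A) • m) := mul_smul _ _ _
      _ = (a : A) • (op ((f a' : B)) • m) := by rw [hfprop a' m]
      _ = op ((f a' : B)) • ((a : A) • m) := smul_comm _ _ _
      _ = op ((f a' : B)) • (op ((f a : B)) • m) := by rw [hfprop a m]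
      _ = (op ((f a' : B)) * op ((f a : B))) • m := (mul_smul _ _ _).symm
      _ = op ((f a : B) * (f a' : B)) • m := by rw [← op_mul]
  have map_add' : ∀ a a' : PA, f (a + a') = f a + f a' := by
    intro a a'
    refine Subtype.ext (f_eq (a + a') ((f a : B) + (f a' : B)) (fun m => ?_))
    rw [Subalgebra.coe_add, add_smul, hfprop a m, hfprop a' m, op_add, add_smul]
  have commutes' : ∀ r : R, f (algebraMap R PA r) = algebraMap R PB r := by
    intro r
    refine Subtype.ext (f_eq (algebraMap R PA r) (algebraMap R B r) (fun m => ?_))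
    have h1 : ((algebraMap R PA r : PA) : A) = algebraMap R A r := rfl
    rw [h1, algebraMap_smul, ← MulOpposite.algebraMap_apply, algebraMap_smul]
  have map_zero' : f 0 = 0 := by
    refine Subtype.ext (f_eq 0 0 (fun m => by simp))
  let F : PA →ₐ[R] PB :=
    { toFun := f, map_one' := map_one', map_mul' := map_mul',
      map_zero' := map_zero', map_add' := map_add', commutes' := commutes' }
  have hinj : Function.Injective F := by
    intro a a' h
    refine Subtype.ext (faithA' _ _ (fun m => ?_))
    rw [hfprop a m, hfprop a' m, show f a = f a' from h]
  have hsurj : Function.Surjective F := by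
    intro b
    refine ⟨g b, Subtype.ext (f_eq (g b) (b : B) (hgprop b))⟩
  refine ⟨AlgEquiv.ofBijective F ⟨hinj, hsurj⟩, hfprop, ?_⟩
  intro η' hη'
  apply AlgEquiv.ext
  intro a
  exact Subtype.ext (faithB' _ _ (fun m => (hη' a m).symm.trans (hfprop a m)))

end
end

section
/- Let 𝔄 = Tri(A, M, B) ⊆ 𝔄₁ = Tri(A₁, M, B₁) be triangular algebras with the same identity, A ⊆ A₁, B ⊆ B₁. If {f_n : A → A₁} and {g_n : B → B₁} are higher derivations, {h_n : M → M} are linear maps with h_n(am) = Σ_{i+j=n} f_i(a)h_j(m) and h_n(mb) = Σ_{i+j=n} h_i(m)g_j(b) for all a ∈ A, b ∈ B, m ∈ M, and {m_j} ⊆ M is any sequence, then the maps Δ_n([[a,m],[0,b]]) = [[f_n(a), Σ_{i+j=n, i≠n}(f_i(a)m_j − m_j g_i(b)) + h_n(m)],[0, g_n(b)]] form a higher derivation Δ = {Δ_n} from 𝔄 to 𝔄₁. -/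
/-!
Write `C_n(a, b) = Σ_{i+j=n} (f_i(a) m_j − m_j g_i(b))`; the off-diagonal entry of `Δ_n` is `C_n`
computed with `m_0` replaced by `0`, plus `h_n(m)`. The Leibniz rules for `f` and `g` give
`C_n(aa', bb') = Σ_{i+j=n} (f_i(a) C_j(a', b') + C_i(a, b) g_j(b'))`: expanding both sides into
sums over `i + p + q = n`, the mixed terms `f_i(a) m_q g_p(b')` cancel on the right. Together with
the compatibility of `h` with the bimodule actions this is exactly the off-diagonal entry of
`Σ_{i+j=n} Δ_i(x) Δ_j(y)`, while the diagonal entries are the Leibniz rules themselves.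
-/

set_option linter.unusedSectionVars false

open MulOpposite TrivSqZeroExt Finset

namespace Tri

variable {A B M : Type*} [Ring A] [Ring B] [AddCommGroup M] [Module A M] [Module Bᵐᵒᵖ M]

theorem mk_mul (a a' : A) (m m' : M) (b b' : B) :
    mk a m b * mk a' m' b' = mk (a * a') (a • m' + op b' • m) (b * b') :=
  rfl

theorem sum_mk {ι : Type*} (s : Finset ι) (a : ι → A) (m : ι → M) (b : ι → B) :
    ∑ i ∈ s, mk (a i) (m i) (b i) = mk (∑ i ∈ s, a i) (∑ i ∈ s, m i) (∑ i ∈ s, b i) := by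
  ext <;> simp only [fst_sum, snd_sum, Prod.fst_sum, Prod.snd_sum] <;> rfl

end Tri

section Antidiagonal

variable {M : Type*} [AddCommMonoid M]

theorem sum_antidiagonal_sum_antidiagonal_assoc (n : ℕ) (F : ℕ → ℕ → ℕ → M) :
    ∑ ij ∈ antidiagonal n, ∑ pq ∈ antidiagonal ij.1, F pq.1 pq.2 ij.2 =
      ∑ ij ∈ antidiagonal n, ∑ pq ∈ antidiagonal ij.2, F ij.1 pq.1 pq.2 := by
  rw [sum_sigma', sum_sigma']
  refine sum_nbij' (fun x => ⟨(x.2.1, x.2.2 + x.1.2), (x.2.2, x.1.2)⟩)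
    (fun x => ⟨(x.1.1 + x.2.1, x.2.2), (x.1.1, x.2.1)⟩) ?_ ?_ ?_ ?_ ?_ <;>
    rintro ⟨⟨i, j⟩, p, q⟩ hx <;>
    simp_all only [mem_sigma, HasAntidiagonal.mem_antidiagonal, and_true] <;> omega

theorem sum_antidiagonal_sum_antidiagonal_middle (n : ℕ) (F : ℕ → ℕ → ℕ → M) :
    ∑ ij ∈ antidiagonal n, ∑ pq ∈ antidiagonal ij.1, F pq.1 ij.2 pq.2 =
      ∑ ij ∈ antidiagonal n, ∑ pq ∈ antidiagonal ij.2, F ij.1 pq.1 pq.2 := by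
  rw [sum_antidiagonal_sum_antidiagonal_assoc n fun x y z => F x z y]
  exact sum_congr rfl fun ij _ => Nat.sum_antidiagonal_swap (f := fun pq => F ij.1 pq.1 pq.2)

theorem sum_antidiagonal_smul_sum_smul_comm {S T : Type*} [DistribSMul S M] [DistribSMul T M]
    [SMulCommClass S T M] (x : ℕ → S) (y : ℕ → T) (μ : ℕ → M) (n : ℕ) :
    ∑ ij ∈ antidiagonal n, x ij.1 • ∑ pq ∈ antidiagonal ij.2, y pq.1 • μ pq.2 =
      ∑ ij ∈ antidiagonal n, y ij.2 • ∑ pq ∈ antidiagonal ij.1, x pq.1 • μ pq.2 := by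
  simp_rw [smul_sum]
  rw [sum_antidiagonal_sum_antidiagonal_middle n fun i j k => y j • x i • μ k]
  exact sum_congr rfl fun _ _ => sum_congr rfl fun _ _ => smul_comm _ _ _

end Antidiagonal

def IsHigherLeibniz {A A₁ : Type*} [Mul A] [NonUnitalNonAssocSemiring A₁] (f : ℕ → A → A₁) :
    Prop :=
  ∀ n a a', f n (a * a') = ∑ ij ∈ antidiagonal n, f ij.1 a * f ij.2 a'

namespace IsHigherLeibniz

variable {A A₁ : Type*} [Mul A] [Semiring A₁]

theorem sum_smul {M : Type*} [AddCommMonoid M] [Module A₁ M] {f : ℕ → A → A₁}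
    (hf : IsHigherLeibniz f) (μ : ℕ → M) (n : ℕ) (a a' : A) :
    ∑ ij ∈ antidiagonal n, f ij.1 (a * a') • μ ij.2 =
      ∑ ij ∈ antidiagonal n, f ij.1 a • ∑ pq ∈ antidiagonal ij.2, f pq.1 a' • μ pq.2 := by
  simp_rw [hf _ a a', Finset.sum_smul, smul_sum, mul_smul]
  exact sum_antidiagonal_sum_antidiagonal_assoc n fun i j k => f i a • f j a' • μ k

protected theorem op {f : ℕ → A → A₁} (hf : IsHigherLeibniz f) :
    IsHigherLeibniz fun n (x : Aᵐᵒᵖ) => op (f n x.unop) := by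
  intro n x y
  simp only [unop_mul, hf _ y.unop x.unop, op_sum, op_mul]
  exact (Nat.sum_antidiagonal_swap (f := fun ij => op (f ij.2 x.unop) * op (f ij.1 y.unop))).symm

end IsHigherLeibniz

section CommutatorSum

variable {A B A₁ B₁ M : Type*} [Mul A] [Mul B] [Semiring A₁] [Semiring B₁]
  [AddCommGroup M] [Module A₁ M] [Module B₁ᵐᵒᵖ M] [SMulCommClass A₁ B₁ᵐᵒᵖ M]

def commutatorSum (f : ℕ → A → A₁) (g : ℕ → B → B₁) (μ : ℕ → M) (n : ℕ) (a : A) (b : B) : M :=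
  ∑ ij ∈ antidiagonal n, (f ij.1 a • μ ij.2 - op (g ij.1 b) • μ ij.2)

theorem commutatorSum_mul {f : ℕ → A → A₁} {g : ℕ → B → B₁} (hf : IsHigherLeibniz f)
    (hg : IsHigherLeibniz g) (μ : ℕ → M) (n : ℕ) (a a' : A) (b b' : B) :
    commutatorSum f g μ n (a * a') (b * b') =
      ∑ ij ∈ antidiagonal n, (f ij.1 a • commutatorSum f g μ ij.2 a' b' +
        op (g ij.2 b') • commutatorSum f g μ ij.1 a b) := by
  have hright : ∑ ij ∈ antidiagonal n, op (g ij.1 (b * b')) • μ ij.2 =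
      ∑ ij ∈ antidiagonal n, op (g ij.2 b') • ∑ pq ∈ antidiagonal ij.1, op (g pq.1 b) • μ pq.2 := by
    -- right multiplication by `g` is left multiplication by its opposite family
    refine (hg.op.sum_smul μ n (op b') (op b)).trans ?_
    exact (Nat.sum_antidiagonal_swap (f := fun ij =>
      op (g ij.1 b') • ∑ pq ∈ antidiagonal ij.2, op (g pq.1 b) • μ pq.2)).symm
  simp only [commutatorSum, sum_sub_distrib, smul_sub, sum_add_distrib, hf.sum_smul, hright,
    sum_antidiagonal_smul_sum_smul_comm (fun i => f i a) (fun i => op (g i b'))]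
  abel

theorem commutatorSum_update_zero (f : ℕ → A → A₁) (g : ℕ → B → B₁) (μ : ℕ → M) (n : ℕ)
    (a : A) (b : B) :
    commutatorSum f g (Function.update μ 0 0) n a b =
      ∑ ij ∈ (antidiagonal n).filter (fun ij => ij.1 ≠ n),
        (f ij.1 a • μ ij.2 - op (g ij.1 b) • μ ij.2) := by
  rw [commutatorSum, sum_filter]
  refine sum_congr rfl fun ij hij => ?_
  have hfst : ij.1 = n ↔ ij.2 = 0 := by rw [HasAntidiagonal.mem_antidiagonal] at hij; omega
  by_cases h : ij.2 = 0 <;> simp [h, hfst]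

end CommutatorSum

section
variable {R A B A₁ B₁ M : Type*} [CommRing R]
  [Ring A] [Ring B] [Ring A₁] [Ring B₁]
  [Algebra R A] [Algebra R B] [Algebra R A₁] [Algebra R B₁]
  [AddCommGroup M] [Module R M] [Module A₁ M] [Module B₁ᵐᵒᵖ M]
  [SMulCommClass A₁ B₁ᵐᵒᵖ M] [IsScalarTower R A₁ M] [IsScalarTower R B₁ᵐᵒᵖ M]

theorem formula_gives_higher_derivation_general
    (φA : A →ₐ[R] A₁)
    (φB : B →ₐ[R] B₁)
    (f : ℕ → A →ₗ[R] A₁) (g : ℕ → B →ₗ[R] B₁) (h : ℕ → M →ₗ[R] M) (mseq : ℕ → M)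
    (hf : ∀ (n : ℕ) (a a' : A),
      f n (a * a') = ∑ ij ∈ antidiagonal n, f ij.1 a * f ij.2 a')
    (hg : ∀ (n : ℕ) (b b' : B),
      g n (b * b') = ∑ ij ∈ antidiagonal n, g ij.1 b * g ij.2 b')
    (hham : ∀ (n : ℕ) (a : A) (m : M),
      h n (φA a • m) = ∑ ij ∈ antidiagonal n, f ij.1 a • h ij.2 m)
    (hhmb : ∀ (n : ℕ) (m : M) (b : B),
      h n (op (φB b) • m) = ∑ ij ∈ antidiagonal n, op (g ij.2 b) • h ij.1 m)
    (Δ : ℕ → A → M → B → Tri A₁ B₁ M)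
    (hΔ : ∀ (n : ℕ) (a : A) (m : M) (b : B),
      Δ n a m b = Tri.mk (f n a)
        ((∑ ij ∈ (antidiagonal n).filter (fun ij => ij.1 ≠ n),
            (f ij.1 a • mseq ij.2 - op (g ij.1 b) • mseq ij.2)) + h n m)
        (g n b)) :
    ∀ (n : ℕ) (a a' : A) (m m' : M) (b b' : B),
      Δ n (a * a') (φA a • m' + op (φB b') • m) (b * b') =
        ∑ ij ∈ antidiagonal n, Δ ij.1 a m b * Δ ij.2 a' m' b' := by
  intro n a a' m m' b b'
  have hΔ_eq : ∀ k x y z, Δ k x y z = Tri.mk (f k x)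
      (commutatorSum (fun k => f k) (fun k => g k) (Function.update mseq 0 0) k x z + h k y)
      (g k z) := fun k x y z => by
    rw [hΔ, commutatorSum_update_zero]
  simp only [hΔ_eq, Tri.mk_mul, Tri.sum_mk]
  rw [hf, hg, map_add, hham, hhmb, commutatorSum_mul hf hg]
  congr 1
  simp only [smul_add, sum_add_distrib]
  abel

/-- Given higher derivations `{f_n : A → A₁}`, `{g_n : B → B₁}`, compatible maps
`{h_n : M → M}` and a sequence `{m_j} ⊆ M`, the maps
`Δ_n([[a,m],[0,b]]) = [[f_n(a), Σ_{i+j=n, i≠n}(f_i(a)m_j − m_j g_i(b)) + h_n(m)],[0, g_n(b)]]`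
form a higher derivation of the triangular algebra `Tri(A,M,B)` into `Tri(A₁,M,B₁)`.
Here `A ⊆ A₁` and `B ⊆ B₁` are realized by injective algebra maps `φA`, `φB`. -/
theorem formula_gives_higher_derivation
    (φA : A →ₐ[R] A₁) (hφA : Function.Injective φA)
    (φB : B →ₐ[R] B₁) (hφB : Function.Injective φB)
    (f : ℕ → A →ₗ[R] A₁) (g : ℕ → B →ₗ[R] B₁) (h : ℕ → M →ₗ[R] M) (mseq : ℕ → M)
    (hf0 : ∀ a, f 0 a = φA a) (hg0 : ∀ b, g 0 b = φB b) (hh0 : h 0 = LinearMap.id)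
    (hf : ∀ (n : ℕ) (a a' : A),
      f n (a * a') = ∑ ij ∈ antidiagonal n, f ij.1 a * f ij.2 a')
    (hg : ∀ (n : ℕ) (b b' : B),
      g n (b * b') = ∑ ij ∈ antidiagonal n, g ij.1 b * g ij.2 b')
    (hham : ∀ (n : ℕ) (a : A) (m : M),
      h n (φA a • m) = ∑ ij ∈ antidiagonal n, f ij.1 a • h ij.2 m)
    (hhmb : ∀ (n : ℕ) (m : M) (b : B),
      h n (op (φB b) • m) = ∑ ij ∈ antidiagonal n, op (g ij.2 b) • h ij.1 m)
    (Δ : ℕ → A → M → B → Tri A₁ B₁ M)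
    (hΔ : ∀ (n : ℕ) (a : A) (m : M) (b : B),
      Δ n a m b = Tri.mk (f n a)
        ((∑ ij ∈ (antidiagonal n).filter (fun ij => ij.1 ≠ n),
            (f ij.1 a • mseq ij.2 - op (g ij.1 b) • mseq ij.2)) + h n m)
        (g n b)) :
    ∀ (n : ℕ) (a a' : A) (m m' : M) (b b' : B),
      Δ n (a * a') (φA a • m' + op (φB b') • m) (b * b') =
        ∑ ij ∈ antidiagonal n, Δ ij.1 a m b * Δ ij.2 a' m' b' :=
  formula_gives_higher_derivation_general φA φB f g h mseq hf hg hham hhmb Δ hΔ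

end
end

section
/- Let {Δ_n : 𝔄 → 𝔄₁} be a higher derivation between triangular algebras as above, and write Δ_n([[a,0],[0,0]]) with entries f_n(a), h′_n(a), g′_n(a). Then f_n(aa′) = Σ_{i+j=n} f_i(a)f_j(a′) for all a, a′ ∈ A, i.e., {f_n} is a higher derivation on the corner A, and g′_n(aa′) = 0 for all a, a′ ∈ A. -/
set_option linter.unusedSectionVars false

open MulOpposite TrivSqZeroExt Finset

section
variable {R A B A₁ B₁ M : Type*} [CommRing R]
  [Ring A] [Ring B] [Ring A₁] [Ring B₁]
  [Algebra R A] [Algebra R B] [Algebra R A₁] [Algebra R B₁]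
  [AddCommGroup M] [Module R M] [Module A₁ M] [Module B₁ᵐᵒᵖ M]
  [SMulCommClass A₁ B₁ᵐᵒᵖ M] [IsScalarTower R A₁ M] [IsScalarTower R B₁ᵐᵒᵖ M]

/-- For a higher derivation `{Δ_n}` between triangular algebras, the
`(1,1)`-component `f_n` of `Δ_n` on the corner `A` is a higher derivation
and the `(2,2)`-component `g'_n` vanishes on products. -/
theorem corner_A_component_higher_derivation
    (φA : A →ₐ[R] A₁) (hφA : Function.Injective φA)
    (φB : B →ₐ[R] B₁) (hφB : Function.Injective φB)
    (Δ : ℕ → A → M → B → Tri A₁ B₁ M)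
    (hΔ0 : ∀ (a : A) (m : M) (b : B), Δ 0 a m b = Tri.mk (φA a) m (φB b))
    (hΔadd : ∀ (n : ℕ) (a a' : A) (m m' : M) (b b' : B),
      Δ n (a + a') (m + m') (b + b') = Δ n a m b + Δ n a' m' b')
    (hΔsmul : ∀ (n : ℕ) (r : R) (a : A) (m : M) (b : B),
      Δ n (r • a) (r • m) (r • b) = r • Δ n a m b)
    (hΔmul : ∀ (n : ℕ) (a a' : A) (m m' : M) (b b' : B),
      Δ n (a * a') (φA a • m' + op (φB b') • m) (b * b') =
        ∑ ij ∈ antidiagonal n, Δ ij.1 a m b * Δ ij.2 a' m' b')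
    (f : ℕ → A → A₁) (hfdef : ∀ (n : ℕ) (a : A), f n a = (fst (Δ n a 0 0)).1)
    (g' : ℕ → A → B₁) (hg'def : ∀ (n : ℕ) (a : A), g' n a = (fst (Δ n a 0 0)).2) :
    ∀ (n : ℕ) (a a' : A),
      f n (a * a') = ∑ ij ∈ antidiagonal n, f ij.1 a * f ij.2 a' ∧
      g' n (a * a') = 0 := by
  -- projection onto the `B₁` corner, as an additive monoid hom
  let π : Tri A₁ B₁ M →+ B₁ :=
    { toFun := fun x => (fst x).2
      map_zero' := rfl
      map_add' := fun x y => by simp }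
  have hπmul : ∀ x y : Tri A₁ B₁ M, π (x * y) = π x * π y := fun x y => by
    show (fst (x * y)).2 = _
    rw [fst_mul]; rfl
  -- the corner equation for products
  have hcorner : ∀ (n : ℕ) (a a' : A),
      Δ n (a * a') 0 0 = ∑ ij ∈ antidiagonal n, Δ ij.1 a 0 0 * Δ ij.2 a' 0 0 := by
    intro n a a'
    have h := hΔmul n a a' 0 0 0 0
    simpa using h
  -- `g' n 1 = 0` by strong induction
  have hy : ∀ n, g' n 1 = 0 := by
    intro n
    induction n using Nat.strong_induction_on with
    | _ n ih =>
      cases n with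
      | zero =>
        rw [hg'def, hΔ0]
        show (φB 0) = 0
        exact map_zero φB
      | succ n =>
        have h := congrArg π (hcorner (n + 1) 1 1)
        rw [one_mul, map_sum] at h
        rw [hg'def]
        show π (Δ (n + 1) 1 0 0) = 0
        rw [h]
        refine Finset.sum_eq_zero fun ij hij => ?_
        rw [hπmul]
        rcases Nat.eq_zero_or_pos ij.1 with h2 | h2
        · have : π (Δ ij.1 1 0 0) = 0 := by
            rw [h2]
            show (fst (Δ 0 1 0 0)).2 = 0
            rw [hΔ0]; exact map_zero φB
          rw [this, zero_mul]
        · have hlt : ij.2 < n + 1 := by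
            have := (Finset.HasAntidiagonal.mem_antidiagonal.mp hij); omega
          have : π (Δ ij.2 1 0 0) = 0 := by
            have := ih ij.2 hlt
            rw [hg'def] at this; exact this
          rw [this, mul_zero]
  -- hence `g' n a = 0` for all `a`
  have hg0 : ∀ n a, g' n a = 0 := by
    intro n a
    have h := congrArg π (hcorner n a 1)
    rw [mul_one, map_sum] at h
    rw [hg'def]
    show π (Δ n a 0 0) = 0
    rw [h]
    refine Finset.sum_eq_zero fun ij _ => ?_
    rw [hπmul]
    have : π (Δ ij.2 1 0 0) = 0 := by
      have := hy ij.2; rw [hg'def] at this; exact this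
    rw [this, mul_zero]
  intro n a a'
  constructor
  · -- first components of the corner equation
    have h := congrArg (fun x : Tri A₁ B₁ M => (fst x).1) (hcorner n a a')
    rw [hfdef, h]
    have : (fst (∑ ij ∈ antidiagonal n, Δ ij.1 a 0 0 * Δ ij.2 a' 0 0)).1 =
        ∑ ij ∈ antidiagonal n, (fst (Δ ij.1 a 0 0 * Δ ij.2 a' 0 0)).1 := by
      let ρ : Tri A₁ B₁ M →+ A₁ :=
        { toFun := fun x => (fst x).1
          map_zero' := rfl
          map_add' := fun x y => by simp }
      exact map_sum ρ _ _
    rw [this]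
    refine Finset.sum_congr rfl fun ij _ => ?_
    rw [fst_mul, hfdef, hfdef]
    rfl
  · exact hg0 n (a * a')

end
end

section
/- Let {Δ_n : 𝔄 → 𝔄₁} be a higher derivation between triangular algebras. Writing Δ_n([[0,m],[0,0]]) = [[f′_n(m), h_n(m)],[0, g″_n(m)]], one has f′_n(m) = 0 and g″_n(m) = 0 for all m ∈ M and all n ≥ 1; that is, Δ_n maps the off-diagonal corner e𝔄f into e𝔄₁f. -/
set_option linter.unusedSectionVars false

open MulOpposite TrivSqZeroExt Finset

section
variable {R A B A₁ B₁ M : Type*} [CommRing R]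
  [Ring A] [Ring B] [Ring A₁] [Ring B₁]
  [Algebra R A] [Algebra R B] [Algebra R A₁] [Algebra R B₁]
  [AddCommGroup M] [Module R M] [Module A₁ M] [Module B₁ᵐᵒᵖ M]
  [SMulCommClass A₁ B₁ᵐᵒᵖ M] [IsScalarTower R A₁ M] [IsScalarTower R B₁ᵐᵒᵖ M]

/-- For a higher derivation `{Δ_n}` between triangular algebras, the diagonal
components of `Δ_n` on the off-diagonal corner vanish for `n ≥ 1`:
`Δ_n` maps `e𝔄f` into `e𝔄₁f`. -/
theorem offdiagonal_corner_maps_to_offdiagonal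
    (φA : A →ₐ[R] A₁) (hφA : Function.Injective φA)
    (φB : B →ₐ[R] B₁) (hφB : Function.Injective φB)
    (Δ : ℕ → A → M → B → Tri A₁ B₁ M)
    (hΔ0 : ∀ (a : A) (m : M) (b : B), Δ 0 a m b = Tri.mk (φA a) m (φB b))
    (hΔadd : ∀ (n : ℕ) (a a' : A) (m m' : M) (b b' : B),
      Δ n (a + a') (m + m') (b + b') = Δ n a m b + Δ n a' m' b')
    (hΔsmul : ∀ (n : ℕ) (r : R) (a : A) (m : M) (b : B),
      Δ n (r • a) (r • m) (r • b) = r • Δ n a m b)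
    (hΔmul : ∀ (n : ℕ) (a a' : A) (m m' : M) (b b' : B),
      Δ n (a * a') (φA a • m' + op (φB b') • m) (b * b') =
        ∑ ij ∈ antidiagonal n, Δ ij.1 a m b * Δ ij.2 a' m' b')
    (f' : ℕ → M → A₁) (hf'def : ∀ (n : ℕ) (m : M), f' n m = (fst (Δ n 0 m 0)).1)
    (g'' : ℕ → M → B₁) (hg''def : ∀ (n : ℕ) (m : M), g'' n m = (fst (Δ n 0 m 0)).2) :
    ∀ n : ℕ, 1 ≤ n → ∀ m : M, f' n m = 0 ∧ g'' n m = 0 := by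
  have hzero : ∀ k : ℕ, Δ k 0 0 0 = 0 := by
    intro k
    have h := hΔsmul k (0 : R) 0 0 0
    simpa using h
  intro n
  induction n using Nat.strong_induction_on with
  | _ n ih =>
    intro hn m
    have hf0 : ∀ m : M, f' 0 m = 0 := by
      intro m; simp [hf'def, hΔ0, Tri.mk, TrivSqZeroExt.fst]
    have hg0 : ∀ m : M, g'' 0 m = 0 := by
      intro m; simp [hg''def, hΔ0, Tri.mk, TrivSqZeroExt.fst]
    have h1 := hΔmul n 0 1 m 0 0 0
    have h2 := hΔmul n 1 0 0 m 0 0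
    simp only [mul_zero, zero_mul, mul_one, one_mul, map_zero, map_one, zero_smul,
      smul_zero, op_zero, add_zero, zero_add, one_smul, hzero] at h1 h2
    constructor
    · -- f' n m = 0 from h1 : 0 = ∑ ... (x * e = 0)
      have e1 := congrArg (fun t => (fst t).1) h1
      simp only [fst_sum, fst_mul, fst_zero, Prod.fst_sum, Prod.fst_mul, Prod.fst_zero] at e1
      rw [Finset.sum_eq_single (n, 0)] at e1
      · have hp0 : (fst (Δ 0 1 0 0)).1 = 1 := by
          simp [hΔ0, Tri.mk, TrivSqZeroExt.fst]
        rw [hp0, mul_one] at e1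
        rw [hf'def]; exact e1.symm
      · intro ij hij hne
        rcases Nat.lt_or_ge ij.1 n with hlt | hge
        · rcases Nat.eq_zero_or_pos ij.1 with h0 | hpos
          · have := hf0 m
            rw [hf'def] at this
            rw [h0] at *
            rw [this, zero_mul]
          · have := (ih ij.1 hlt hpos m).1
            rw [hf'def] at this
            rw [this, zero_mul]
        · exfalso
          have h1' : ij.1 + ij.2 = n := (Finset.HasAntidiagonal.mem_antidiagonal.mp hij)
          have : ij.1 = n := le_antisymm (by omega) hge
          apply hne
          ext <;> simp [this] <;> omega
      · intro h; exact absurd (Finset.HasAntidiagonal.mem_antidiagonal.mpr (by simp)) h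
    · -- g'' n m = 0 from h2 : Δ n 0 m 0 = ∑ ... (e * x = x)
      have e2 := congrArg (fun t => (fst t).2) h2
      simp only [fst_sum, fst_mul, Prod.snd_sum, Prod.snd_mul] at e2
      rw [hg''def]
      rw [e2]
      apply Finset.sum_eq_zero
      intro ij hij
      rcases Nat.eq_zero_or_pos ij.1 with h0 | hpos
      · have hq0 : (fst (Δ 0 1 0 0)).2 = 0 := by
          simp [hΔ0, Tri.mk, TrivSqZeroExt.fst]
        rw [h0, hq0, zero_mul]
      · have hlt : ij.2 < n := by
          have := Finset.HasAntidiagonal.mem_antidiagonal.mp hij; omega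
        rcases Nat.eq_zero_or_pos ij.2 with h20 | hpos2
        · have := hg0 m
          rw [hg''def] at this
          rw [h20, this, mul_zero]
        · have := (ih ij.2 hlt hpos2 m).2
          rw [hg''def] at this
          rw [this, mul_zero]

end
end

section
/- Suppose {d_n : A → A₁} are linear maps with d_0 the inclusion, M is an (A,B)-bimodule faithful as a left A₁-module, and {h_n : M → M} satisfy h_0 = id and h_n(am) = Σ_{i+j=n} d_i(a)h_j(m) for all a ∈ A, m ∈ M, n ∈ ℕ. If {d_i}_{i<n} is a higher derivation up to order n−1 (i.e., d_r(aa′) = Σ_{i+j=r} d_i(a)d_j(a′) for all r < n), then d_n(aa′) = Σ_{p+q=n} d_p(a)d_q(a′) for all a, a′ ∈ A. -/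
open Finset

/-!
Expanding `h_n((aa′)m)` once gives `Σ_{i+j=n} d_i(aa′) h_j(m)`; expanding `h_n(a(a′m))` twice and
regrouping gives `Σ_{i+j=n} (Σ_{p+q=i} d_p(a) d_q(a′)) h_j(m)`. By the induction hypothesis the two
sums agree in every term with `i < n`, and the term with `i = n` carries `h_0(m) = m`, so
`d_n(aa′) m = (Σ_{p+q=n} d_p(a) d_q(a′)) m` for all `m`; faithfulness concludes.
-/

theorem sum_antidiagonal_smul_sum_antidiagonal_smul {A S M : Type*} [AddCommMonoid A]
    [HasAntidiagonal A] [Semiring S] [AddCommMonoid M] [Module S M]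
    (x y : A → S) (z : A → M) (n : A) :
    ∑ ij ∈ antidiagonal n, x ij.1 • ∑ kl ∈ antidiagonal ij.2, y kl.1 • z kl.2 =
      ∑ ij ∈ antidiagonal n, (∑ kl ∈ antidiagonal ij.1, x kl.1 * y kl.2) • z ij.2 := by
  simp only [smul_sum, sum_smul, mul_smul, sum_sigma']
  apply sum_nbij' (fun ⟨⟨i, _⟩, ⟨k, l⟩⟩ ↦ ⟨(i + k, l), (i, k)⟩)
    (fun ⟨⟨_, j⟩, ⟨k, l⟩⟩ ↦ ⟨(k, l + j), (l, j)⟩) <;> aesop (add simp [add_assoc])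

theorem smul_eq_smul_of_sum_antidiagonal_smul_eq {S M : Type*} [AddCancelCommMonoid M] [SMul S M]
    (x y : ℕ → S) (z : ℕ → M) (n : ℕ) (hlt : ∀ i < n, x i = y i)
    (hsum : ∑ ij ∈ antidiagonal n, x ij.1 • z ij.2 = ∑ ij ∈ antidiagonal n, y ij.1 • z ij.2) :
    x n • z 0 = y n • z 0 := by
  simp only [Nat.sum_antidiagonal_eq_sum_range_succ_mk, sum_range_succ, Nat.sub_self] at hsum
  rwa [sum_congr rfl fun i hi => by rw [hlt i (mem_range.mp hi)], add_left_cancel_iff] at hsum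

theorem higher_derivation_step_from_faithful_module_general
    (R A A₁ M : Type*) [CommRing R] [Ring A] [Ring A₁]
    [Algebra R A] [Algebra R A₁]
    [AddCommGroup M] [Module R M] [Module A₁ M]
    (φA : A →ₐ[R] A₁)
    (faith : ∀ x : A₁, (∀ m : M, x • m = 0) → x = 0)
    (d : ℕ → A →ₗ[R] A₁)
    (h : ℕ → M →ₗ[R] M) (hh0 : h 0 = LinearMap.id)
    (hcompat : ∀ (n : ℕ) (a : A) (m : M),
      h n (φA a • m) = ∑ ij ∈ antidiagonal n, d ij.1 a • h ij.2 m)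
    (n : ℕ)
    (hind : ∀ r < n, ∀ a a' : A,
      d r (a * a') = ∑ ij ∈ antidiagonal r, d ij.1 a * d ij.2 a') :
    ∀ a a' : A, d n (a * a') = ∑ ij ∈ antidiagonal n, d ij.1 a * d ij.2 a' := by
  intro a a'
  have hexpand (m : M) : ∑ ij ∈ antidiagonal n, d ij.1 (a * a') • h ij.2 m =
      ∑ ij ∈ antidiagonal n, (∑ pq ∈ antidiagonal ij.1, d pq.1 a * d pq.2 a') • h ij.2 m := by
    rw [← hcompat, map_mul, mul_smul, hcompat]
    simp only [hcompat]
    exact sum_antidiagonal_smul_sum_antidiagonal_smul (fun i => d i a) (fun i => d i a')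
      (fun j => h j m) n
  rw [← sub_eq_zero]
  refine faith _ fun m => ?_
  have hm := smul_eq_smul_of_sum_antidiagonal_smul_eq (fun i => d i (a * a'))
    (fun i => ∑ pq ∈ antidiagonal i, d pq.1 a * d pq.2 a') (fun j => h j m) n
    (fun i hi => hind i hi a a') (hexpand m)
  rwa [hh0, LinearMap.id_apply, ← sub_eq_zero, ← sub_smul] at hm

/-- If `{d_i}_{i<n}` is a higher derivation up to order `n-1` and the maps
`h_n : M → M` satisfy `h_0 = id` and `h_n(am) = Σ_{i+j=n} d_i(a)h_j(m)` on a
faithful left `A₁`-module `M`, then the product rule holds at order `n` as well. -/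
theorem higher_derivation_step_from_faithful_module
    (R A A₁ B M : Type*) [CommRing R] [Ring A] [Ring A₁] [Ring B]
    [Algebra R A] [Algebra R A₁] [Algebra R B]
    [AddCommGroup M] [Module R M] [Module A₁ M] [Module Bᵐᵒᵖ M]
    [SMulCommClass A₁ Bᵐᵒᵖ M] [IsScalarTower R A₁ M]
    (φA : A →ₐ[R] A₁) (hφA : Function.Injective φA)
    (faith : ∀ x : A₁, (∀ m : M, x • m = 0) → x = 0)
    (d : ℕ → A →ₗ[R] A₁) (hd0 : ∀ a : A, d 0 a = φA a)
    (h : ℕ → M →ₗ[R] M) (hh0 : h 0 = LinearMap.id)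
    (hcompat : ∀ (n : ℕ) (a : A) (m : M),
      h n (φA a • m) = ∑ ij ∈ antidiagonal n, d ij.1 a • h ij.2 m)
    (n : ℕ)
    (hind : ∀ r < n, ∀ a a' : A,
      d r (a * a') = ∑ ij ∈ antidiagonal r, d ij.1 a * d ij.2 a') :
    ∀ a a' : A, d n (a * a') = ∑ ij ∈ antidiagonal n, d ij.1 a * d ij.2 a' :=
  higher_derivation_step_from_faithful_module_general R A A₁ M φA faith d h hh0 hcompat n hind
end
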